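/- If V is a square matrix over F[x] in weak Popov form with rows spanning a module V̂, and s ∈ V̂ is a nonzero vector of minimal degree among nonzero vectors of V̂ with leading position 0, then the row v of V with LP(v) = 0 satisfies deg v = deg s; in particular such a row yields a minimal solution. -/

import Mathlib

open Polynomial

noncomputable section

variable {F : Type*} [Field F]

/-- The degree of a vector of polynomials: maximum of the coordinate degrees. -/
def vecDeg {n : ℕ} (v : Fin n → Polynomial F) : WithBot ℕ :=
  Finset.univ.sup fun j => (v j).degree

/-- The degree of a vector, as a natural number. -/
def vecDegNat {n : ℕ} (v : Fin n → Polynomial F) : ℕ :=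
  Finset.univ.sup fun j => (v j).natDegree

/-- The leading position of a vector: the largest index attaining the degree. -/
def leadPos {n : ℕ} (v : Fin n → Polynomial F) : ℕ :=
  (Finset.univ.filter fun j => (v j).degree = vecDeg v).sup fun j => (j : ℕ)

/-- The value function val(v) = n * deg v + LP(v). -/
def vecVal {n : ℕ} (v : Fin n → Polynomial F) : ℕ :=
  n * vecDegNat v + leadPos v

/-- The weight-embedding map Φ. -/
def PhiW (ν : ℕ) {n : ℕ} (w : Fin n → ℕ) (v : Fin n → Polynomial F) :
    Fin n → Polynomial F :=
  fun j => X ^ (w j) * (Polynomial.expand F ν (v j))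

/-- The rows of the canonical basis matrix M. -/
def rowBasisM (ℓ : ℕ) (S G : Fin ℓ → Polynomial F) :
    Fin (ℓ+1) → Fin (ℓ+1) → Polynomial F :=
  fun i => Fin.cases (Fin.cons 1 S) (fun i' => fun j => if j = i'.succ then G i' else 0) i

/-!
Write `s = ∑ r, c r • V r` and let `D` be the largest of the degrees `deg c_r + deg V_r`.
Among the rows attaining `D`, the one with the largest leading position `p` governs `s`: in
coordinate `p` its term has degree exactly `D` while every other term has smaller degree, and
beyond `p` all terms stay below `D`, because the leading positions of the rows are distinct.
Hence `deg s = D` and `LP(s) = p`. When `LP(s) = 0` this row is therefore the unique row of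
leading position `0`, its degree is at most `D = deg s`, and minimality of `s` gives the reverse
inequality.
-/

lemma degree_sum_lt_of_forall_degree_lt {ι : Type*} {t : Finset ι} {g : ι → F[X]}
    {D : WithBot ℕ} (hD : D ≠ ⊥) (h : ∀ i ∈ t, (g i).degree < D) : (∑ i ∈ t, g i).degree < D :=
  (degree_sum_le t g).trans_lt ((Finset.sup_lt_iff hD.bot_lt).2 h)

section VectorDegree

variable {n : ℕ}

lemma degree_le_vecDeg (v : Fin n → F[X]) (j : Fin n) : (v j).degree ≤ vecDeg v :=
  Finset.le_sup (f := fun j => (v j).degree) (Finset.mem_univ j)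

lemma vecDeg_eq_bot_iff {v : Fin n → F[X]} : vecDeg v = ⊥ ↔ v = 0 := by
  simp only [vecDeg, Finset.sup_eq_bot_iff, Finset.mem_univ, true_implies, degree_eq_bot,
    funext_iff, Pi.zero_apply]

lemma exists_degree_eq_vecDeg_of_leadPos {v : Fin n → F[X]} (hv : v ≠ 0) :
    ∃ j : Fin n, (v j).degree = vecDeg v ∧ (j : ℕ) = leadPos v := by
  have hne : (Finset.univ.filter fun j => (v j).degree = vecDeg v).Nonempty := by
    have : (Finset.univ : Finset (Fin n)).Nonempty := by
      by_contra h
      exact hv (vecDeg_eq_bot_iff.1 (by simp [vecDeg, Finset.not_nonempty_iff_eq_empty.1 h]))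
    obtain ⟨j, -, hj⟩ := Finset.exists_mem_eq_sup _ this fun j => (v j).degree
    exact ⟨j, Finset.mem_filter.2 ⟨Finset.mem_univ j, hj.symm⟩⟩
  obtain ⟨j, hj, hjp⟩ := Finset.exists_mem_eq_sup _ hne fun j : Fin n => (j : ℕ)
  exact ⟨j, (Finset.mem_filter.1 hj).2, hjp.symm⟩

lemma degree_lt_vecDeg_of_leadPos_lt {v : Fin n → F[X]} {j : Fin n} (hj : leadPos v < j) :
    (v j).degree < vecDeg v := by
  refine (degree_le_vecDeg v j).lt_of_ne fun h => hj.not_ge ?_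
  exact Finset.le_sup (f := fun j : Fin n => (j : ℕ))
    (Finset.mem_filter.2 ⟨Finset.mem_univ j, h⟩)

lemma vecDeg_eq_and_leadPos_eq {v : Fin n → F[X]} {D : WithBot ℕ} {p : Fin n}
    (hle : ∀ j, (v j).degree ≤ D) (hp : (v p).degree = D)
    (hlt : ∀ j : Fin n, p < j → (v j).degree < D) :
    vecDeg v = D ∧ leadPos v = p := by
  have hdeg : vecDeg v = D :=
    le_antisymm (Finset.sup_le fun j _ => hle j) (hp ▸ degree_le_vecDeg v p)
  refine ⟨hdeg, le_antisymm (Finset.sup_le fun j hj => ?_) ?_⟩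
  · have hj : (v j).degree = D := hdeg ▸ (Finset.mem_filter.1 hj).2
    exact Fin.le_iff_val_le_val.1 (not_lt.1 fun hpj => (hlt j hpj).ne hj)
  · exact Finset.le_sup (f := fun j : Fin n => (j : ℕ))
      (Finset.mem_filter.2 ⟨Finset.mem_univ p, hp.trans hdeg.symm⟩)

lemma degree_mul_lt_of_leadPos_lt {a : F[X]} {v : Fin n → F[X]} {D : WithBot ℕ} {j : Fin n}
    (hD : D ≠ ⊥) (hle : a.degree + vecDeg v ≤ D)
    (hlt : a.degree + vecDeg v = D → leadPos v < j) :
    (a * v j).degree < D := by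
  rcases eq_or_ne a 0 with rfl | ha
  · simpa using hD.bot_lt
  rw [degree_mul]
  rcases hle.lt_or_eq with hlt' | heq
  · exact (add_le_add_right (degree_le_vecDeg v j) _).trans_lt hlt'
  · exact heq ▸ WithBot.add_lt_add_left (degree_ne_bot.2 ha)
      (degree_lt_vecDeg_of_leadPos_lt (hlt heq))

end VectorDegree

theorem exists_vecDeg_sum_eq_and_leadPos_sum_eq {m n : ℕ} {V : Fin m → Fin n → F[X]}
    (hV : Function.Injective fun r => leadPos (V r)) (c : Fin m → F[X])
    (hs : ∑ r, c r • V r ≠ 0) :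
    ∃ r₀, vecDeg (∑ r, c r • V r) = (c r₀).degree + vecDeg (V r₀) ∧
      leadPos (∑ r, c r • V r) = leadPos (V r₀) := by
  set s := ∑ r, c r • V r
  have hs_apply (j : Fin n) : s j = ∑ r, c r * V r j := by simp [s, Finset.sum_apply]
  set f := fun r => (c r).degree + vecDeg (V r)
  set D := Finset.univ.sup f
  have hfD (r : Fin m) : f r ≤ D := Finset.le_sup (Finset.mem_univ r)
  have hle (j : Fin n) : (s j).degree ≤ D := by
    rw [hs_apply]
    refine (degree_sum_le _ _).trans (Finset.sup_le fun r _ => ?_)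
    exact (degree_mul_le _ _).trans ((add_le_add_right (degree_le_vecDeg _ j) _).trans (hfD r))
  have hD : D ≠ ⊥ := fun h => hs (funext fun j => degree_eq_bot.1 (le_bot_iff.1 (h ▸ hle j)))
  obtain ⟨r, -, hr⟩ := Finset.exists_mem_eq_sup Finset.univ
    (Finset.nonempty_iff_ne_empty.2 fun h => hD (by simp [D, h])) f
  obtain ⟨r₀, hr₀, hmax⟩ := Finset.exists_max_image (Finset.univ.filter fun r => f r = D)
    (fun r => leadPos (V r)) ⟨r, Finset.mem_filter.2 ⟨Finset.mem_univ r, hr.symm⟩⟩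
  have hfr₀ : f r₀ = D := (Finset.mem_filter.1 hr₀).2
  have hterm (r : Fin m) (j : Fin n) (hj : leadPos (V r₀) ≤ j)
      (hr : r ≠ r₀ ∨ leadPos (V r₀) < j) : (c r * V r j).degree < D := by
    refine degree_mul_lt_of_leadPos_lt hD (hfD r) fun hfr => ?_
    have hlp : leadPos (V r) ≤ leadPos (V r₀) :=
      hmax r (Finset.mem_filter.2 ⟨Finset.mem_univ r, hfr⟩)
    rcases hr with hr | hr
    · exact (hlp.lt_of_ne fun h => hr (hV h)).trans_le hj
    · exact hlp.trans_lt hr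
  have hV₀ : V r₀ ≠ 0 := fun h => hD (by simp [← hfr₀, f, vecDeg_eq_bot_iff.2 h])
  obtain ⟨p, hp, hpl⟩ := exists_degree_eq_vecDeg_of_leadPos hV₀
  have hsp : (s p).degree = D := by
    have hrest : (∑ r ∈ Finset.univ.erase r₀, c r * V r p).degree < D :=
      degree_sum_lt_of_forall_degree_lt hD fun r hr =>
        hterm r p hpl.ge (Or.inl (Finset.ne_of_mem_erase hr))
    have hlead : (c r₀ * V r₀ p).degree = D := by rw [degree_mul, hp, ← hfr₀]
    rw [hs_apply, ← Finset.sum_erase_add _ _ (Finset.mem_univ r₀), ← hlead]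
    exact degree_add_eq_right_of_degree_lt (hlead ▸ hrest)
  have hlt (j : Fin n) (hj : p < j) : (s j).degree < D := by
    rw [hs_apply]
    exact degree_sum_lt_of_forall_degree_lt hD fun r _ =>
      hterm r j (hpl ▸ hj.le) (Or.inr (hpl ▸ hj))
  obtain ⟨hdeg, hlp⟩ := vecDeg_eq_and_leadPos_eq hle hsp hlt
  exact ⟨r₀, hdeg.trans hfr₀.symm, hlp.trans hpl⟩

theorem stmt19_general (n : ℕ) (V : Matrix (Fin n) (Fin n) (Polynomial F))
    (hwp : Function.Injective fun i => leadPos (V i))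
    (s : Fin n → Polynomial F) (hs : s ≠ 0)
    (hsM : s ∈ Submodule.span (Polynomial F) (Set.range fun r => V r))
    (hLPs : leadPos s = 0)
    (hmin : ∀ b, b ∈ Submodule.span (Polynomial F) (Set.range fun r => V r) →
      b ≠ 0 → leadPos b = 0 → vecDeg s ≤ vecDeg b) :
    (∃ i, leadPos (V i) = 0 ∧ vecDeg (V i) = vecDeg s) ∧
      ∀ i, leadPos (V i) = 0 → vecDeg (V i) = vecDeg s := by
  obtain ⟨c, rfl⟩ := (Submodule.mem_span_range_iff_exists_fun F[X]).1 hsM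
  obtain ⟨r₀, hdeg, hlp⟩ := exists_vecDeg_sum_eq_and_leadPos_sum_eq hwp c hs
  obtain ⟨hc₀, hV₀⟩ := WithBot.add_ne_bot.1 (hdeg ▸ mt vecDeg_eq_bot_iff.1 hs)
  have hlp₀ : leadPos (V r₀) = 0 := hlp ▸ hLPs
  have heq : vecDeg (V r₀) = vecDeg (∑ r, c r • V r) :=
    le_antisymm (hdeg ▸ le_add_of_nonneg_left (zero_le_degree_iff.2 (degree_ne_bot.1 hc₀)))
      (hmin _ (Submodule.subset_span ⟨r₀, rfl⟩) (mt vecDeg_eq_bot_iff.2 hV₀) hlp₀)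
  exact ⟨⟨r₀, hlp₀, heq⟩, fun i hi => hwp (hi.trans hlp₀.symm) ▸ heq⟩

theorem stmt19 (n : ℕ) (V : Matrix (Fin n) (Fin n) (Polynomial F)) (hV : V.det ≠ 0)
    (hwp : Function.Injective fun i => leadPos (V i))
    (s : Fin n → Polynomial F) (hs : s ≠ 0)
    (hsM : s ∈ Submodule.span (Polynomial F) (Set.range fun r => V r))
    (hLPs : leadPos s = 0)
    (hmin : ∀ b, b ∈ Submodule.span (Polynomial F) (Set.range fun r => V r) →
      b ≠ 0 → leadPos b = 0 → vecDeg s ≤ vecDeg b) :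
    (∃ i, leadPos (V i) = 0 ∧ vecDeg (V i) = vecDeg s) ∧
      ∀ i, leadPos (V i) = 0 → vecDeg (V i) = vecDeg s :=
  stmt19_general n V hwp s hs hsM hLPs hmin
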